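/- arXiv:2104.12994 — 2 statements merged into one kernel-verified Lean document; each statement's English description precedes it below -/
import Mathlib

section
/- Let G be a group that is nilpotent of class at most 3 (i.e. every triple commutator ⁅⁅x,y⁆,z⁆ lies in the center Z(G)). Then the middle nucleus is contained in the left nucleus of the associated gyrogroup: for every a ∈ G, if (x∘a)∘y = x∘(a∘y) for all x,y ∈ G, then a∘(x∘y) = (a∘x)∘y for all x,y ∈ G, where x∘y = y⁻¹xy². -/
/-! Read at `(x, y⁻¹)`, the middle-nucleus identity for `a` says exactly that `x` commutes with
`⁅a, y⁆`, so `a` lies in the second centre `Z₂(G)`. For `a ∈ Z₂(G)` the map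
`κ z = ⁅z⁻¹, a⁆ = z⁻¹ a z a⁻¹` is a homomorphism with central values and `a ∘ w = κ w * a * w`;
both sides of the left-nucleus identity then equal `κ x * κ y * a * (x ∘ y)`. -/

/-- The gyrogroup operation associated with a group: `x ∘ y = y⁻¹ * x * y²`. -/
def gyrOp {G : Type*} [Group G] (x y : G) : G := y⁻¹ * x * y ^ 2

open scoped commutatorElement

open Subgroup (center mem_center_iff)

section Gyrogroup

variable {G : Type*} [Group G]

theorem gyrOp_left_injective (y : G) : Function.Injective (gyrOp · y) := fun x₁ x₂ h => by
  simpa [gyrOp] using h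

theorem gyrOp_eq_commutatorElement_mul (a w : G) : gyrOp a w = ⁅w⁻¹, a⁆ * a * w := by
  simp only [gyrOp, commutatorElement_def, pow_two]
  group

theorem gyrOp_mul_left (a x y : G) : gyrOp (a * x) y = ⁅y⁻¹, a⁆ * a * gyrOp x y := by
  simp only [gyrOp, commutatorElement_def, pow_two]
  group

theorem gyrOp_mul_left_of_mem_center {c : G} (hc : c ∈ center G) (x y : G) :
    gyrOp (c * x) y = c * gyrOp x y := by
  simp only [gyrOp, ← mul_assoc, (mem_center_iff.mp hc y⁻¹).symm]

theorem map_gyrOp {H : Type*} [Group H] (f : G →* H) (x y : G) :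
    f (gyrOp x y) = gyrOp (f x) (f y) := by
  simp only [gyrOp, map_inv, map_mul, map_pow]

theorem gyrOp_eq_mul_of_commute {x y : G} (h : Commute x y) : gyrOp x y = x * y := by
  rw [gyrOp, ← h.inv_right.eq, mul_assoc, pow_two, inv_mul_cancel_left]

theorem gyrOp_gyrOp_inv_right (x a y : G) :
    gyrOp x (gyrOp a y⁻¹) = gyrOp (gyrOp (⁅a, y⁆ * x * ⁅a, y⁆⁻¹) a) y⁻¹ := by
  simp only [gyrOp, commutatorElement_def, pow_two, inv_inv, mul_inv_rev]
  group

theorem mem_upperCentralSeries_two_of_gyrOp_middle {a : G}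
    (ha : ∀ x y : G, gyrOp (gyrOp x a) y = gyrOp x (gyrOp a y)) :
    a ∈ Subgroup.upperCentralSeries G 2 := by
  refine Subgroup.mem_upperCentralSeries_succ_iff.mpr fun y => ?_
  rw [Subgroup.upperCentralSeries_one, mem_center_iff]
  intro x
  have hconj : ⁅a, y⁆ * x * ⁅a, y⁆⁻¹ = x := by
    have h := ha x y⁻¹
    rw [gyrOp_gyrOp_inv_right] at h
    exact gyrOp_left_injective a (gyrOp_left_injective y⁻¹ h.symm)
  exact (mul_inv_eq_iff_eq_mul.mp hconj).symm

section SecondCenter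

variable {a : G} (ha : a ∈ Subgroup.upperCentralSeries G 2)
include ha

theorem commutatorElement_mem_center_of_mem_upperCentralSeries_two (z : G) :
    ⁅z, a⁆ ∈ center G := by
  rw [← commutatorElement_inv, ← Subgroup.upperCentralSeries_one]
  exact inv_mem (Subgroup.mem_upperCentralSeries_succ_iff.mp ha z)

def commutatorElementInvLeftHom : G →* G where
  toFun z := ⁅z⁻¹, a⁆
  map_one' := by rw [inv_one, commutatorElement_one_left]
  map_mul' z w := by
    have hz := commutatorElement_mem_center_of_mem_upperCentralSeries_two ha z⁻¹
    rw [mul_inv_rev, commutatorElement_mul_left_eq_conj_mul, mem_center_iff.mp hz w⁻¹,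
      mul_inv_cancel_right]

theorem gyrOp_gyrOp_of_mem_upperCentralSeries_two (x y : G) :
    gyrOp a (gyrOp x y) = gyrOp (gyrOp a x) y := by
  have hgyrOp : ⁅(gyrOp x y)⁻¹, a⁆ = ⁅x⁻¹, a⁆ * ⁅y⁻¹, a⁆ := by
    have hy := commutatorElement_mem_center_of_mem_upperCentralSeries_two ha y⁻¹
    exact (map_gyrOp (commutatorElementInvLeftHom ha) x y).trans
      (gyrOp_eq_mul_of_commute (mem_center_iff.mp hy _))
  calc gyrOp a (gyrOp x y)
      = ⁅x⁻¹, a⁆ * (⁅y⁻¹, a⁆ * a * gyrOp x y) := by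
        rw [gyrOp_eq_commutatorElement_mul, hgyrOp]; group
    _ = ⁅x⁻¹, a⁆ * gyrOp (a * x) y := by rw [gyrOp_mul_left]
    _ = gyrOp (⁅x⁻¹, a⁆ * (a * x)) y :=
        (gyrOp_mul_left_of_mem_center
          (commutatorElement_mem_center_of_mem_upperCentralSeries_two ha _) _ _).symm
    _ = gyrOp (gyrOp a x) y := by rw [gyrOp_eq_commutatorElement_mul a x, mul_assoc]

end SecondCenter

end Gyrogroup

theorem middleNucleus_subset_leftNucleus_general {G : Type*} [Group G] (a : G)
    (ha : ∀ x y : G, gyrOp (gyrOp x a) y = gyrOp x (gyrOp a y)) :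
    ∀ x y : G, gyrOp a (gyrOp x y) = gyrOp (gyrOp a x) y :=
  gyrOp_gyrOp_of_mem_upperCentralSeries_two (mem_upperCentralSeries_two_of_gyrOp_middle ha)

theorem middleNucleus_subset_leftNucleus {G : Type*} [Group G]
    (h3 : ∀ x y z : G, ⁅⁅x, y⁆, z⁆ ∈ Subgroup.center G) (a : G)
    (ha : ∀ x y : G, gyrOp (gyrOp x a) y = gyrOp x (gyrOp a y)) :
    ∀ x y : G, gyrOp a (gyrOp x y) = gyrOp (gyrOp a x) y :=
  middleNucleus_subset_leftNucleus_general a ha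
end

section
/- Let G be a finite group that is nilpotent of class exactly 3 (i.e. every triple commutator ⁅⁅x,y⁆,z⁆ lies in the center Z(G), but not every triple commutator is trivial), and suppose 3 does not divide the order of G. Then the loop commutator operation of the associated gyrogroup is not associative: there exist x, y, z ∈ G with °⁅°⁅x,y⁆, z⁆ ≠ °⁅x, °⁅y,z⁆⁆; equivalently, ⁅⁅x,y⁆,z⁆⁹ ≠ ⁅x,⁅y,z⁆⁆⁹ for some x,y,z ∈ G. -/
/-- The loop commutator of the associated gyrogroup:
`°⁅x,y⁆ = (y∘x)·(x∘y)·(y∘x)⁻²`. -/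
def loopComm {G : Type*} [Group G] (x y : G) : G :=
  gyrOp y x * gyrOp x y * (gyrOp y x ^ 2)⁻¹

open scoped commutatorElement

/-!
If `⁅a, b⁆` is central then `°⁅a, b⁆ = ⁅a, b⁆ ^ 3`, and `°⁅a, b⁆` does not change when either
argument is multiplied by a central element. Since `G ⧸ Z(G)` has class at most two,
`°⁅x, y⁆ ≡ ⁅x, y⁆ ^ 3` modulo `Z(G)`, hence `°⁅°⁅x, y⁆, z⁆ = ⁅⁅x, y⁆, z⁆ ^ 9` and
`°⁅x, °⁅y, z⁆⁆ = ⁅x, ⁅y, z⁆⁆ ^ 9`. As `3 ∤ |G|`, ninth powers are injective, so associativity of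
the loop commutator would make the group commutator associative. With central triple commutators
the Hall–Witt identity becomes the Jacobi identity, and together with associativity it forces
every triple commutator to vanish (Levi).
-/

open Subgroup

section Commutators

variable {G : Type*} [Group G]

lemma commute_of_mem_center {z : G} (h : z ∈ center G) (g : G) : Commute z g :=
  (mem_center_iff.mp h g).symm

lemma commutatorElement_mul_left_of_mem_center {w : G} (hw : w ∈ center G) (x c : G) :
    ⁅w * x, c⁆ = ⁅x, c⁆ := by
  rw [commutatorElement_mul_left_eq_conj_mul, (commute_of_mem_center hw c).commutator_eq,
    mul_one, (commute_of_mem_center hw _).mul_inv_cancel]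

lemma commutatorElement_pow_left_of_mem_center {c z : G} (h : ⁅c, z⁆ ∈ center G) (n : ℕ) :
    ⁅c ^ n, z⁆ = ⁅c, z⁆ ^ n := by
  induction n with
  | zero => simp
  | succ n ih =>
    rw [pow_succ', commutatorElement_mul_left_eq_conj_mul, ih,
      ((commute_of_mem_center h c).pow_left n).symm.mul_inv_cancel, pow_succ]

lemma commutatorElement_pow_right_of_mem_center {x c : G} (h : ⁅x, c⁆ ∈ center G) (n : ℕ) :
    ⁅x, c ^ n⁆ = ⁅x, c⁆ ^ n := by
  have h' : ⁅c, x⁆ ∈ center G := by rwa [← commutatorElement_inv, inv_mem_iff]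
  rw [← commutatorElement_inv, commutatorElement_pow_left_of_mem_center h', ← inv_pow,
    commutatorElement_inv]

variable (h3 : ∀ x y z : G, ⁅⁅x, y⁆, z⁆ ∈ center G)
include h3

lemma commutatorElement_commutatorElement_right_mem_center (x y z : G) :
    ⁅x, ⁅y, z⁆⁆ ∈ center G := by
  rw [← commutatorElement_inv]
  exact inv_mem (h3 y z x)

-- `g⁻¹ ⁅a, b⁆ g` is again a commutator and differs from `⁅a, b⁆` by a central factor.
lemma commutatorElement_commutatorElement_conj_right (a b g c : G) :
    ⁅⁅a, b⁆, g * c * g⁻¹⁆ = ⁅⁅a, b⁆, c⁆ := by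
  have hconj : g⁻¹ * ⁅a, b⁆ * g = ⁅g⁻¹, ⁅a, b⁆⁆ * ⁅a, b⁆ := by group
  calc ⁅⁅a, b⁆, g * c * g⁻¹⁆ = g * ⁅g⁻¹ * ⁅a, b⁆ * g, c⁆ * g⁻¹ := by group
    _ = ⁅g⁻¹ * ⁅a, b⁆ * g, c⁆ := by
      rw [show g⁻¹ * ⁅a, b⁆ * g = ⁅g⁻¹ * a * g, g⁻¹ * b * g⁆ by group]
      exact (commute_of_mem_center (h3 _ _ c) g).symm.mul_inv_cancel
    _ = ⁅⁅a, b⁆, c⁆ := by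
      rw [hconj, commutatorElement_mul_left_of_mem_center
        (commutatorElement_commutatorElement_right_mem_center h3 _ _ _)]

lemma commutatorElement_jacobi (a b c : G) :
    ⁅⁅a, b⁆, c⁆ * ⁅⁅b, c⁆, a⁆ * ⁅⁅c, a⁆, b⁆ = 1 := by
  simpa only [commutatorElement_commutatorElement_conj_right h3] using
    commutatorElement_commutatorElement_conj_mul a b c

lemma commutatorElement_commutatorElement_eq_one_of_assoc
    (hassoc : ∀ x y z : G, ⁅⁅x, y⁆, z⁆ = ⁅x, ⁅y, z⁆⁆) (x y z : G) : ⁅⁅x, y⁆, z⁆ = 1 := by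
  have hjac := commutatorElement_jacobi h3 x y z
  have hyzx : ⁅⁅y, z⁆, x⁆ = ⁅⁅x, y⁆, z⁆⁻¹ := by rw [hassoc x y z, commutatorElement_inv]
  have hzxy : ⁅⁅z, x⁆, y⁆ = ⁅⁅x, y⁆, z⁆⁻¹ := by rw [hassoc z x y, commutatorElement_inv]
  rwa [hyzx, hzxy, mul_inv_cancel, one_mul, inv_eq_one] at hjac

end Commutators

section LoopCommutator

variable {G : Type*} [Group G]

lemma map_loopComm {H : Type*} [Group H] (f : G →* H) (a b : G) :
    f (loopComm a b) = loopComm (f a) (f b) := by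
  simp only [loopComm, gyrOp, map_mul, map_inv, map_pow]

lemma loopComm_eq_conj (a b : G) :
    loopComm a b = gyrOp b a * (gyrOp a b * (gyrOp b a)⁻¹) * (gyrOp b a)⁻¹ := by
  rw [loopComm]
  group

lemma loopComm_eq_commutatorElement_pow_three {a b : G} (h : ⁅a, b⁆ ∈ center G) :
    loopComm a b = ⁅a, b⁆ ^ 3 := by
  have hba : gyrOp b a = (a⁻¹ * ⁅a, b⁆⁻¹ * a) * (b * a) := by
    simp only [gyrOp, commutatorElement_def, pow_two]; group
  have hab : gyrOp a b = (b⁻¹ * ⁅a, b⁆ * b) * ⁅a, b⁆ * (b * a) := by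
    simp only [gyrOp, commutatorElement_def, pow_two]; group
  rw [(commute_of_mem_center (inv_mem h) a).symm.inv_mul_cancel] at hba
  rw [(commute_of_mem_center h b).symm.inv_mul_cancel] at hab
  rw [loopComm_eq_conj, hba, hab, show ⁅a, b⁆ * ⁅a, b⁆ * (b * a) * (⁅a, b⁆⁻¹ * (b * a))⁻¹ =
    ⁅a, b⁆ ^ 3 by rw [pow_three]; group]
  exact (commute_of_mem_center (pow_mem h 3) _).symm.mul_inv_cancel

lemma gyrOp_mul_left_of_mem_center_s19 {w : G} (hw : w ∈ center G) (a b : G) :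
    gyrOp (w * a) b = w * gyrOp a b := by
  simp only [gyrOp, ← mul_assoc, (commute_of_mem_center hw b⁻¹).eq]

lemma gyrOp_mul_right_of_mem_center {w : G} (hw : w ∈ center G) (a b : G) :
    gyrOp a (w * b) = w * gyrOp a b := by
  calc gyrOp a (w * b) = w * (w⁻¹ * (b⁻¹ * (w⁻¹ * a * w) * b) * w) * b := by
        rw [gyrOp, pow_two]; group
    _ = w * gyrOp a b := by
      rw [(commute_of_mem_center hw a).inv_mul_cancel,
        (commute_of_mem_center hw _).inv_mul_cancel, gyrOp, pow_two]
      group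

lemma mul_mul_inv_sq_of_mem_center {w : G} (hw : w ∈ center G) (g h : G) :
    w * g * (w * h) * ((w * g) ^ 2)⁻¹ = g * h * (g ^ 2)⁻¹ := by
  calc w * g * (w * h) * ((w * g) ^ 2)⁻¹ = w * (g * (w * (h * g⁻¹) * w⁻¹) * g⁻¹) * w⁻¹ := by
        rw [pow_two]; group
    _ = g * h * (g ^ 2)⁻¹ := by
      rw [(commute_of_mem_center hw _).mul_inv_cancel, (commute_of_mem_center hw _).mul_inv_cancel,
        pow_two]
      group

lemma loopComm_mul_left_of_mem_center {w : G} (hw : w ∈ center G) (a b : G) :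
    loopComm (w * a) b = loopComm a b := by
  rw [loopComm, gyrOp_mul_left_of_mem_center_s19 hw, gyrOp_mul_right_of_mem_center hw,
    mul_mul_inv_sq_of_mem_center hw, loopComm]

lemma loopComm_mul_right_of_mem_center {w : G} (hw : w ∈ center G) (a b : G) :
    loopComm a (w * b) = loopComm a b := by
  rw [loopComm, gyrOp_mul_left_of_mem_center_s19 hw, gyrOp_mul_right_of_mem_center hw,
    mul_mul_inv_sq_of_mem_center hw, loopComm]

end LoopCommutator

section ClassThree

variable {G : Type*} [Group G] (h3 : ∀ x y z : G, ⁅⁅x, y⁆, z⁆ ∈ center G)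
include h3

lemma commutatorElement_mk_mem_center_quotient (x y : G) :
    ⁅(x : G ⧸ center G), (y : G ⧸ center G)⁆ ∈ center (G ⧸ center G) := by
  refine mem_center_iff.mpr fun q ↦ ?_
  induction q using QuotientGroup.induction_on with
  | H z => exact (commutatorElement_eq_one_iff_mul_comm.mp
      ((QuotientGroup.eq_one_iff _).mpr (h3 x y z))).symm

lemma loopComm_mul_inv_commutatorElement_pow_three_mem_center (x y : G) :
    loopComm x y * (⁅x, y⁆ ^ 3)⁻¹ ∈ center G := by
  rw [← QuotientGroup.eq_one_iff]
  change QuotientGroup.mk' (center G) (loopComm x y * (⁅x, y⁆ ^ 3)⁻¹) = 1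
  rw [map_mul, map_inv, map_pow, map_commutatorElement, map_loopComm,
    QuotientGroup.mk'_apply, QuotientGroup.mk'_apply,
    loopComm_eq_commutatorElement_pow_three (commutatorElement_mk_mem_center_quotient h3 x y),
    mul_inv_cancel]

lemma loopComm_loopComm_left (x y z : G) : loopComm (loopComm x y) z = ⁅⁅x, y⁆, z⁆ ^ 9 := by
  have hpow := commutatorElement_pow_left_of_mem_center (h3 x y z) 3
  rw [← inv_mul_cancel_right (loopComm x y) (⁅x, y⁆ ^ 3),
    loopComm_mul_left_of_mem_center
      (loopComm_mul_inv_commutatorElement_pow_three_mem_center h3 x y),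
    loopComm_eq_commutatorElement_pow_three (hpow ▸ pow_mem (h3 x y z) 3), hpow, ← pow_mul]

lemma loopComm_loopComm_right (x y z : G) : loopComm x (loopComm y z) = ⁅x, ⁅y, z⁆⁆ ^ 9 := by
  have hcen := commutatorElement_commutatorElement_right_mem_center h3 x y z
  have hpow := commutatorElement_pow_right_of_mem_center hcen 3
  rw [← inv_mul_cancel_right (loopComm y z) (⁅y, z⁆ ^ 3),
    loopComm_mul_right_of_mem_center
      (loopComm_mul_inv_commutatorElement_pow_three_mem_center h3 y z),
    loopComm_eq_commutatorElement_pow_three (hpow ▸ pow_mem hcen 3), hpow, ← pow_mul]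

end ClassThree

theorem loopComm_not_assoc_of_class_three {G : Type*} [Group G] [Fintype G]
    (h3 : ∀ x y z : G, ⁅⁅x, y⁆, z⁆ ∈ Subgroup.center G)
    (hcl3 : ∃ x y z : G, ⁅⁅x, y⁆, z⁆ ≠ 1)
    (hcard : ¬ (3 ∣ Fintype.card G)) :
    (∃ x y z : G, loopComm (loopComm x y) z ≠ loopComm x (loopComm y z)) ∧
      (∃ x y z : G, ⁅⁅x, y⁆, z⁆ ^ 9 ≠ ⁅x, ⁅y, z⁆⁆ ^ 9) := by
  have hcop : (Nat.card G).Coprime (3 ^ 2) := by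
    rw [Nat.card_eq_fintype_card]
    exact ((Nat.prime_three.coprime_iff_not_dvd.mpr hcard).pow_left 2).symm
  have hpow_inj : Function.Injective (· ^ 9 : G → G) := hcop.pow_left_bijective.injective
  have hnine : ∃ x y z : G, ⁅⁅x, y⁆, z⁆ ^ 9 ≠ ⁅x, ⁅y, z⁆⁆ ^ 9 := by
    by_contra! hassoc
    obtain ⟨x, y, z, hne⟩ := hcl3
    exact hne (commutatorElement_commutatorElement_eq_one_of_assoc h3
      (fun x y z ↦ hpow_inj (hassoc x y z)) x y z)
  obtain ⟨x, y, z, hne⟩ := hnine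
  refine ⟨⟨x, y, z, ?_⟩, x, y, z, hne⟩
  rwa [loopComm_loopComm_left h3, loopComm_loopComm_right h3]
end
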